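/- Suppose W ⊆ O \ {O_i, O_j} is such that every proper subset V ⊂ W d-connects O_i and O_j given V ∪ S (i.e., W is a minimal separating set). If O_i and O_j are d-separated given W ∪ S and O_k ∈ W, then O_k is an ancestor of {O_i, O_j} ∪ S. -/

import Mathlib

/-!
Let `W'` consist of the members of `W` that are ancestors of `{i, j} ∪ S`. If some `k ∈ W` were
not among them, `W'` would be a proper subset of `W`, so some path `π` is active given `W' ∪ S`.
Every vertex of an active path is an ancestor of its endpoints or of the conditioning set, so
every vertex of `π` is an ancestor of `{i, j} ∪ S`. As `π` is not active given `W ∪ S`, one of its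
non-colliders lies in `W \ W'`, a vertex of `π` that is not such an ancestor.
-/

open List

variable {V : Type*}

/-- Ancestor relation: directed path or equality. -/
def Anc (E : V → V → Prop) : V → V → Prop := Relation.ReflTransGen E

/-- `x` is an ancestor of some member of the set `T`. -/
def AncSet (E : V → V → Prop) (T : Set V) (x : V) : Prop := ∃ y ∈ T, Anc E x y

/-- Undirected adjacency underlying a directed graph. -/
def Adjacent (E : V → V → Prop) (x y : V) : Prop := E x y ∨ E y x

/-- An (undirected) path in the directed graph: consecutive vertices adjacent, no repeats. -/
def IsTrail (E : V → V → Prop) (l : List V) : Prop := l.Chain' (Adjacent E) ∧ l.Nodup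

/-- `b` is a collider between `a` and `c`: both edges point into `b`. -/
def ColliderTriple (E : V → V → Prop) (a b c : V) : Prop := E a b ∧ E c b

/-- A path from `x` to `y` that is active (d-connecting) given the conditioning set `C`. -/
def ActivePath (E : V → V → Prop) (C : Set V) (l : List V) (x y : V) : Prop :=
  IsTrail E l ∧ l.head? = some x ∧ l.getLast? = some y ∧
  (∀ a b c, [a, b, c] <:+: l → ColliderTriple E a b c → ∃ d ∈ C, Anc E b d) ∧
  (∀ a b c, [a, b, c] <:+: l → ¬ ColliderTriple E a b c → b ∉ C)

/-- d-connection given a conditioning set. -/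
def DConn (E : V → V → Prop) (C : Set V) (x y : V) : Prop := ∃ l, ActivePath E C l x y

/-- d-separation given a conditioning set. -/
def DSep (E : V → V → Prop) (C : Set V) (x y : V) : Prop := ¬ DConn E C x y

/-- An inducing path between `x` and `y` relative to latent set `L` and selection set `S`. -/
def InducingPath (E : V → V → Prop) (L S : Set V) (l : List V) (x y : V) : Prop :=
  IsTrail E l ∧ l.head? = some x ∧ l.getLast? = some y ∧
  (∀ a b c, [a, b, c] <:+: l → ColliderTriple E a b c → AncSet E ({x, y} ∪ S) b) ∧
  (∀ a b c, [a, b, c] <:+: l → ¬ ColliderTriple E a b c → b ∈ L)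

def HasInducingPath (E : V → V → Prop) (L S : Set V) (x y : V) : Prop :=
  ∃ l, InducingPath E L S l x y

/-- The path ends with an arrowhead at its last vertex (is "into" its last vertex). -/
def IntoLast (E : V → V → Prop) (l : List V) : Prop := ∃ p a b, l = p ++ [a, b] ∧ E a b

/-- The path is into its first vertex. -/
def IntoHead (E : V → V → Prop) (l : List V) : Prop := ∃ a b t, l = a :: b :: t ∧ E b a

/-- The path is out of its first vertex. -/
def OutHead (E : V → V → Prop) (l : List V) : Prop := ∃ a b t, l = a :: b :: t ∧ E a b

/-- The path is out of its last vertex. -/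
def OutLast (E : V → V → Prop) (l : List V) : Prop := ∃ p a b, l = p ++ [a, b] ∧ E b a

/-- Membership in D-SEP(x,y). -/
def InDSEP (E : V → V → Prop) (O L S : Set V) (x y k : V) : Prop :=
  ∃ σ : List V, σ.head? = some x ∧ σ.getLast? = some k ∧ σ.Nodup ∧
    (∀ v ∈ σ, v ∈ O ∧ AncSet E ({x, y} ∪ S) v) ∧
    σ.Chain' (HasInducingPath E L S) ∧
    (∀ a b c, [a, b, c] <:+: σ →
      (∃ l, InducingPath E L S l a b ∧ IntoLast E l) ∧
      (∃ l, InducingPath E L S l c b ∧ IntoLast E l))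

/-- A mixed graph: symmetric adjacency together with arrowhead marks.
`arrow x y` means the edge between `x` and `y` has an arrowhead at `y`. -/
structure Mixed (V : Type*) where
  adj : V → V → Prop
  arrow : V → V → Prop

/-- v-structure `a *→ b ←* c` with `a, c` non-adjacent. -/
def VStruct (H : Mixed V) (a b c : V) : Prop :=
  H.adj a b ∧ H.adj b c ∧ ¬ H.adj a c ∧ H.arrow a b ∧ H.arrow c b

def TriangleIn (H : Mixed V) (a b c : V) : Prop := H.adj a b ∧ H.adj b c ∧ H.adj a c

/-- Membership in PD-SEP(x) of a mixed graph. -/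
def InPDSEP (H : Mixed V) (x k : V) : Prop :=
  ∃ pa : List V, pa.head? = some x ∧ pa.getLast? = some k ∧ pa.Nodup ∧ pa.Chain' H.adj ∧
    ∀ a b c, [a, b, c] <:+: pa → VStruct H a b c ∨ TriangleIn H a b c

/-- The MAAG of a directed graph with latent set `L` and selection set `S`:
adjacency iff an inducing path exists, arrowhead at `y` iff `y ∉ Anc({x} ∪ S)`. -/
def MAAG (E : V → V → Prop) (L S : Set V) : Mixed V where
  adj := fun x y => x ≠ y ∧ HasInducingPath E L S x y
  arrow := fun x y => (x ≠ y ∧ HasInducingPath E L S x y) ∧ ¬ AncSet E (insert x S) y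

/-- Undirected (tail-tail) edge of the MAAG. -/
def UndirMAAG (E : V → V → Prop) (L S : Set V) (a b : V) : Prop :=
  (a ≠ b ∧ HasInducingPath E L S a b) ∧ AncSet E (insert b S) a ∧ AncSet E (insert a S) b

/-- Every edge of the path incident to `v` is into `v`. -/
def EdgesIntoAt (E : V → V → Prop) (l : List V) (v : V) : Prop :=
  ∀ a b, [a, b] <:+: l → (a = v → E b v) ∧ (b = v → E a v)

/-- Every edge of the path incident to `v` is out of `v`. -/
def EdgesOutAt (E : V → V → Prop) (l : List V) (v : V) : Prop :=
  ∀ a b, [a, b] <:+: l → (a = v → E v b) ∧ (b = v → E v a)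

theorem AncSet.mono {E : V → V → Prop} {T T' : Set V} {v : V} (hv : AncSet E T v)
    (h : T ⊆ T') : AncSet E T' v :=
  let ⟨t, ht, hvt⟩ := hv
  ⟨t, h ht, hvt⟩

theorem AncSet.trans {E : V → V → Prop} {T U : Set V} {v : V} (hv : AncSet E U v)
    (hU : ∀ u ∈ U, AncSet E T u) : AncSet E T v :=
  let ⟨u, hu, hvu⟩ := hv
  let ⟨t, ht, hut⟩ := hU u hu
  ⟨t, ht, hvu.trans hut⟩

theorem AncSet.head {E : V → V → Prop} {T : Set V} {u v : V} (huv : E u v)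
    (hv : AncSet E T v) : AncSet E T u :=
  let ⟨t, ht, hvt⟩ := hv
  ⟨t, ht, .head huv hvt⟩

/-- Unlike `ActivePath`, this allows repeated vertices and says nothing about non-colliders. -/
def AncestralColliders (E : V → V → Prop) (C : Set V) (l : List V) : Prop :=
  l.IsChain (Adjacent E) ∧
    ∀ a b c, [a, b, c] <:+: l → ColliderTriple E a b c → ∃ d ∈ C, Anc E b d

namespace AncestralColliders

variable {E : V → V → Prop} {C : Set V} {l : List V}

theorem of_infix {l' : List V} (h : AncestralColliders E C l) (hl' : l' <:+: l) :
    AncestralColliders E C l' :=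
  ⟨h.1.infix hl', fun a b c habc => h.2 a b c (habc.trans hl')⟩

theorem reverse (h : AncestralColliders E C l) : AncestralColliders E C l.reverse := by
  refine ⟨isChain_reverse.mpr (h.1.imp fun _ _ hab => hab.symm), fun a b c habc hcol => ?_⟩
  exact h.2 c b a (by simpa using reverse_infix.mpr habc) ⟨hcol.2, hcol.1⟩

/-- Following the path from `v` as long as its edges point forward ends either at the last
vertex or at a collider; the only way to get stuck is an edge into `v` itself. -/
theorem ancSet_or_intoHead {y : V} :
    ∀ {l : List V} {v : V}, AncestralColliders E C l → l.head? = some v →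
      l.getLast? = some y → AncSet E (insert y C) v ∨ IntoHead E l
  | [], _, _, hv, _ => by simp at hv
  | [u], v, _, hv, hy => by
    obtain rfl : u = v := by simpa using hv
    obtain rfl : u = y := by simpa using hy
    exact .inl ⟨u, Set.mem_insert u C, .refl⟩
  | u :: w :: t, v, hl, hv, hy => by
    obtain rfl : u = v := by simpa using hv
    rcases (isChain_cons_cons.mp hl.1).1 with huw | hwu
    · refine .inl (AncSet.head huw ?_)
      rcases ancSet_or_intoHead (hl.of_infix (suffix_cons u _).isInfix) rfl
          (by rwa [getLast?_cons_cons] at hy) with hw | ⟨_, z, t', ht, hzw⟩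
      · exact hw
      · obtain ⟨rfl, rfl⟩ := cons_eq_cons.mp ht
        obtain ⟨d, hd, hwd⟩ := hl.2 u w z ⟨[], t', rfl⟩ ⟨huw, hzw⟩
        exact ⟨d, Set.mem_insert_of_mem y hd, hwd⟩
    · exact .inr ⟨u, w, t, rfl, hwu⟩

end AncestralColliders

namespace ActivePath

variable {E : V → V → Prop} {C : Set V} {l : List V} {x y : V}

theorem ancestralColliders (h : ActivePath E C l x y) : AncestralColliders E C l :=
  ⟨h.1.1, h.2.2.2.1⟩

theorem ancSet_of_mem {v : V} (h : ActivePath E C l x y) (hv : v ∈ l) :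
    AncSet E ({x, y} ∪ C) v := by
  obtain ⟨p, q, rfl⟩ := append_of_mem hv
  have hl := h.ancestralColliders
  have hy : (v :: q).getLast? = some y := by rw [← getLast?_append_cons p]; exact h.2.2.1
  have hx : (v :: p.reverse).getLast? = some x := by
    rw [← getLast?_append_cons q.reverse, ← h.2.1, ← getLast?_reverse]
    simp
  have hsuffix : v :: p.reverse <:+ (p ++ v :: q).reverse := by simp
  rcases (hl.of_infix (suffix_append p _).isInfix).ancSet_or_intoHead rfl hy with
    hright | ⟨_, w, q', hq, hwv⟩
  · exact hright.mono (Set.insert_subset (by simp) (by simp))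
  rcases (hl.reverse.of_infix hsuffix.isInfix).ancSet_or_intoHead rfl hx with
    hleft | ⟨_, u, p', hp, huv⟩
  · exact hleft.mono (Set.insert_subset (by simp) (by simp))
  -- both path edges at `v` point into it, so `v` is a collider
  obtain ⟨rfl, rfl⟩ := cons_eq_cons.mp hq
  obtain ⟨rfl, hp'⟩ := cons_eq_cons.mp hp
  obtain rfl : p = p'.reverse ++ [u] := reverse_eq_cons_iff.mp hp'
  obtain ⟨d, hd, hvd⟩ := hl.2 u v w ⟨p'.reverse, q', by simp⟩ ⟨huv, hwv⟩
  exact ⟨d, .inr hd, hvd⟩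

theorem exists_nonCollider_mem_diff {C' : Set V} (h : ActivePath E C' l x y) (hC : C' ⊆ C)
    (hn : ¬ ActivePath E C l x y) :
    ∃ a b c, [a, b, c] <:+: l ∧ ¬ ColliderTriple E a b c ∧ b ∈ C \ C' := by
  obtain ⟨htrail, hx, hy, hcol, hnon⟩ := h
  by_contra! hall
  refine hn ⟨htrail, hx, hy, fun a b c habc hc => ?_, fun a b c habc hc hb => ?_⟩
  · obtain ⟨d, hd, hbd⟩ := hcol a b c habc hc
    exact ⟨d, hC hd, hbd⟩
  · exact hnon a b c habc hc (by by_contra hb'; exact hall a b c habc hc ⟨hb, hb'⟩)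

end ActivePath

theorem stmt7_general (E : V → V → Prop) (S : Set V)
    (i j k : V) (W : Set V)
    (hmin : ∀ V' : Set V, V' ⊂ W → DConn E (V' ∪ S) i j)
    (hsep : DSep E (W ∪ S) i j) (hk : k ∈ W) :
    AncSet E ({i, j} ∪ S) k := by
  by_contra hk'
  set W' : Set V := {w ∈ W | AncSet E ({i, j} ∪ S) w}
  have hW'W : W' ⊆ W := Set.sep_subset W _
  obtain ⟨l, hl⟩ := hmin W' (hW'W.ssubset_of_not_subset fun h => hk' (h hk).2)
  obtain ⟨a, b, c, habc, -, ⟨hbW | hbS, hbW'⟩⟩ :=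
    hl.exists_nonCollider_mem_diff (Set.union_subset_union_left S hW'W) fun h => hsep ⟨l, h⟩
  · refine hbW' (.inl ⟨hbW, (hl.ancSet_of_mem (habc.subset (by simp))).trans ?_⟩)
    rintro u ((rfl | rfl) | hu | hu)
    exacts [⟨u, by simp, .refl⟩, ⟨u, by simp, .refl⟩, hu.2, ⟨u, .inr hu, .refl⟩]
  · exact hbW' (.inr hbS)

/-- if `W` is a minimal separating set of `i` and `j` (every proper subset
d-connects them given the subset together with `S`) and `W ∪ S` d-separates them, then
every `k ∈ W` is an ancestor of `{i, j} ∪ S`. -/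
theorem stmt7 (E : V → V → Prop) (O L S : Set V)
    (hOL : Disjoint O L) (hOS : Disjoint O S) (hLS : Disjoint L S)
    (hcover : ∀ v : V, v ∈ O ∨ v ∈ L ∨ v ∈ S)
    (i j k : V) (W : Set V) (hW : W ⊆ O \ {i, j})
    (hmin : ∀ V' : Set V, V' ⊂ W → DConn E (V' ∪ S) i j)
    (hsep : DSep E (W ∪ S) i j) (hk : k ∈ W) :
    AncSet E ({i, j} ∪ S) k :=
  stmt7_general E S i j k W hmin hsep hk
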